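/- arXiv:1907.11402 — 6 statements merged into one kernel-verified Lean document; each statement's English description precedes it below -/
import Mathlib

section
/- Let r > 0 and K > 3 be reals, and define sequences α_j and r_j by α_0 = 0, r_0 = r, α_j = (4r)/(K-3) + (1 + 4/(K-3))·α_{j-1}, and r_j = r_{j-1} + 2r + 2α_j for j ≥ 1. Then for all j ≥ 0, r_j ≤ (1 + ((K+1)/2)·((1 + 4/(K-3))^j − 1))·r. -/
/-- Radius growth bound: with `α_0 = 0`, `r_0 = r`,
`α_j = 4r/(K-3) + (1+4/(K-3))·α_{j-1}` and `r_j = r_{j-1} + 2r + 2α_j` for `j ≥ 1`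
(where `r > 0`, `K > 3`), one has
`r_j ≤ (1 + ((K+1)/2)·((1+4/(K-3))^j − 1))·r` for all `j ≥ 0`. -/
theorem radius_le_geom (r K : ℝ) (hr : 0 < r) (hK : 3 < K)
    (α ρ : ℕ → ℝ) (hα0 : α 0 = 0) (hρ0 : ρ 0 = r)
    (hαrec : ∀ j, 1 ≤ j →
      α j = 4 * r / (K - 3) + (1 + 4 / (K - 3)) * α (j - 1))
    (hρrec : ∀ j, 1 ≤ j → ρ j = ρ (j - 1) + 2 * r + 2 * α j) :
    ∀ j, ρ j ≤ (1 + (K + 1) / 2 * ((1 + 4 / (K - 3)) ^ j - 1)) * r := by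
  have hd : K - 3 ≠ 0 := by linarith
  have hA : ∀ n, α n = r * ((1 + 4 / (K - 3)) ^ n - 1) := by
    intro n
    induction n with
    | zero => simpa using hα0
    | succ m ih =>
      have h := hαrec (m + 1) (Nat.le_add_left 1 m)
      simp only [Nat.add_sub_cancel] at h
      rw [h, ih, pow_succ]
      field_simp
      ring
  intro j
  induction j with
  | zero => simp [hρ0]
  | succ m ih =>
    have h := hρrec (m + 1) (Nat.le_add_left 1 m)
    simp only [Nat.add_sub_cancel] at h
    rw [h, hA]
    have key : (2 : ℝ) * r + 2 * (r * ((1 + 4 / (K - 3)) ^ (m + 1) - 1))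
        = (1 + (K + 1) / 2 * ((1 + 4 / (K - 3)) ^ (m + 1) - 1)) * r
          - (1 + (K + 1) / 2 * ((1 + 4 / (K - 3)) ^ m - 1)) * r := by
      rw [pow_succ]
      field_simp
      ring
    linarith
end

section
/- For every real ε with 0 < ε < 1/2 and every integer k ≥ 16^{1/ε}, setting T = log_{⌈k^ε⌉/4}(k^{1-2ε}), it holds that ⌈k^ε⌉·(2⌈k^ε⌉)^T ≤ (1/30)·64^{(1-ε)/ε}·k^{1-ε}. -/
/-- Final radius bound in the `(k^ε, O_ε(k))` spanner construction:
for `0 < ε < 1/2` and integer `k ≥ 16^{1/ε}`, with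
`T = log_{⌈k^ε⌉/4}(k^{1-2ε})`, it holds that
`⌈k^ε⌉·(2⌈k^ε⌉)^T ≤ (1/30)·64^{(1-ε)/ε}·k^{1-ε}`. -/
theorem final_radius_bound (ε : ℝ) (hε0 : 0 < ε) (hε : ε < 1 / 2) (k : ℕ)
    (hk : (16 : ℝ) ^ ((1 : ℝ) / ε) ≤ (k : ℝ)) :
    ((⌈(k : ℝ) ^ ε⌉ : ℝ)) *
      (2 * (⌈(k : ℝ) ^ ε⌉ : ℝ)) ^
        (Real.logb ((⌈(k : ℝ) ^ ε⌉ : ℝ) / 4) ((k : ℝ) ^ (1 - 2 * ε)))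
      ≤ (1 / 30) * (64 : ℝ) ^ ((1 - ε) / ε) * (k : ℝ) ^ (1 - ε) := by
  have hk0 : (0:ℝ) < k := lt_of_lt_of_le (Real.rpow_pos_of_pos (by norm_num) _) hk
  set x : ℝ := (k:ℝ) ^ ε with hxdef
  have hx16 : (16:ℝ) ≤ x := by
    have h1 : (16:ℝ) = ((16:ℝ) ^ ((1:ℝ)/ε)) ^ ε := by
      rw [← Real.rpow_mul (by norm_num), one_div_mul_cancel hε0.ne', Real.rpow_one]
    rw [h1]
    exact Real.rpow_le_rpow (Real.rpow_nonneg (by norm_num) _) hk hε0.le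
  set c : ℝ := ((⌈x⌉ : ℤ) : ℝ) with hcdef
  have hxc : x ≤ c := Int.le_ceil x
  have hc16 : (16:ℝ) ≤ c := le_trans hx16 hxc
  have hc17 : c ≤ (17/16) * x := by
    have := Int.ceil_lt_add_one x
    have hcx : c < x + 1 := by exact_mod_cast this
    nlinarith
  have hk1 : (1:ℝ) < k := by
    by_contra h
    push_neg at h
    have : x ≤ 1 := Real.rpow_le_one hk0.le h hε0.le
    linarith
  have hlogk : 0 < Real.log k := Real.log_pos hk1
  have hεlog : Real.log 16 ≤ ε * Real.log k := by
    have := Real.log_le_log (by norm_num) hx16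
    rwa [hxdef, Real.log_rpow hk0] at this
  have hlog4 : Real.log 4 ≤ ε * Real.log k / 2 := by
    have h16 : Real.log 16 = 2 * Real.log 4 := by
      rw [show (16:ℝ) = 4 ^ 2 by norm_num, Real.log_pow]; push_cast; ring
    linarith [hεlog, h16 ▸ hεlog]
  have hεlogpos : 0 < ε * Real.log k := mul_pos hε0 hlogk
  -- lower bound on log (c/4)
  have hlogc4 : ε * Real.log k / 2 ≤ Real.log (c / 4) := by
    have h1 : x / 4 ≤ c / 4 := by linarith
    have hx0 : (0:ℝ) < x / 4 := by linarith
    have := Real.log_le_log hx0 h1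
    have h2 : Real.log (x / 4) = ε * Real.log k - Real.log 4 := by
      rw [Real.log_div (by positivity) (by norm_num), hxdef, Real.log_rpow hk0]
    linarith
  have hlogc4pos : 0 < Real.log (c / 4) := lt_of_lt_of_le (by linarith) hlogc4
  set T : ℝ := Real.logb (c / 4) ((k:ℝ) ^ (1 - 2*ε)) with hTdef
  have h2ε : 0 < 1 - 2*ε := by linarith
  have hTval : T = (1 - 2*ε) * Real.log k / Real.log (c / 4) := by
    rw [hTdef, Real.logb, Real.log_rpow hk0]
  have hT : T ≤ 2 * ((1 - 2*ε)/ε) := by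
    rw [hTval]
    rw [div_le_iff₀ hlogc4pos]
    have : 2 * ((1 - 2*ε)/ε) * (ε * Real.log k / 2) = (1 - 2*ε) * Real.log k := by
      field_simp
    nlinarith [mul_le_mul_of_nonneg_left hlogc4 (by positivity : (0:ℝ) ≤ 2 * ((1 - 2*ε)/ε))]
  -- split the power
  have hc0 : (0:ℝ) < c := by linarith
  have hsplit : (2 * c) ^ T = (k:ℝ) ^ (1 - 2*ε) * (8:ℝ) ^ T := by
    have h8 : (2 * c) = (c / 4) * 8 := by ring
    rw [h8, Real.mul_rpow (by positivity) (by norm_num)]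
    congr 1
    exact Real.rpow_logb (by positivity) (by nlinarith) (Real.rpow_pos_of_pos hk0 _)
  have h8T : (8:ℝ) ^ T ≤ (64:ℝ) ^ ((1 - 2*ε)/ε) := by
    have h1 : (8:ℝ) ^ T ≤ (8:ℝ) ^ (2 * ((1 - 2*ε)/ε)) :=
      Real.rpow_le_rpow_of_exponent_le (by norm_num) hT
    have h2 : (8:ℝ) ^ (2 * ((1 - 2*ε)/ε)) = (64:ℝ) ^ ((1 - 2*ε)/ε) := by
      rw [Real.rpow_mul (by norm_num : (0:ℝ) ≤ 8)]
      congr 1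
      rw [show ((2:ℝ)) = ((2:ℕ):ℝ) by norm_num, Real.rpow_natCast]
      norm_num
    linarith
  have hBpos : (0:ℝ) < (64:ℝ) ^ ((1 - 2*ε)/ε) := Real.rpow_pos_of_pos (by norm_num) _
  have hkpow : x * (k:ℝ) ^ (1 - 2*ε) = (k:ℝ) ^ (1 - ε) := by
    rw [hxdef, ← Real.rpow_add hk0]; congr 1; ring
  have hRHS : (64:ℝ) ^ ((1 - ε)/ε) = 64 * (64:ℝ) ^ ((1 - 2*ε)/ε) := by
    have h1 : (1 - ε)/ε = 1 + (1 - 2*ε)/ε := by field_simp; ring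
    rw [h1, Real.rpow_add (by norm_num), Real.rpow_one]
  have hkpos : (0:ℝ) < (k:ℝ) ^ (1 - 2*ε) := Real.rpow_pos_of_pos hk0 _
  have hkpos2 : (0:ℝ) < (k:ℝ) ^ (1 - ε) := Real.rpow_pos_of_pos hk0 _
  calc c * (2 * c) ^ T = c * ((k:ℝ) ^ (1 - 2*ε) * (8:ℝ) ^ T) := by rw [hsplit]
    _ ≤ ((17/16) * x) * ((k:ℝ) ^ (1 - 2*ε) * (64:ℝ) ^ ((1 - 2*ε)/ε)) := by
        apply mul_le_mul hc17 (mul_le_mul_of_nonneg_left h8T hkpos.le)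
          (by positivity) (by positivity)
    _ = (17/16) * ((64:ℝ) ^ ((1 - 2*ε)/ε)) * ((k:ℝ) ^ (1 - ε)) := by
        rw [← hkpow]; ring
    _ ≤ (1 / 30) * (64 : ℝ) ^ ((1 - ε) / ε) * (k : ℝ) ^ (1 - ε) := by
        rw [hRHS]
        nlinarith [mul_pos hBpos hkpos2]
end

section
/- In the Thorup–Zwick hierarchy, fix vertices u, v of a weighted graph G, and let i* be the minimal index i such that either p_i(u) ∈ B_i(v) or p_i(v) ∈ B_i(u). Then for every j ≤ i*, dist_G(u, p_j(u)) ≤ j·dist_G(u,v) and dist_G(v, p_j(v)) ≤ j·dist_G(u,v). -/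
/-- Thorup–Zwick pivot distance bound: if `i*` is the minimal index `i` with
`p_i(u) ∈ B_i(v)` or `p_i(v) ∈ B_i(u)`, then for every `j ≤ i*`,
`dist(u, p_j(u)) ≤ j·dist(u,v)` and `dist(v, p_j(v)) ≤ j·dist(u,v)`. -/
theorem tz_pivot_dist_bound {V : Type*} (dist : V → V → ℝ)
    (dist_self : ∀ x, dist x x = 0)
    (dist_symm : ∀ x y, dist x y = dist y x)
    (dist_triangle : ∀ x y z, dist x z ≤ dist x y + dist y z)
    (dist_nonneg : ∀ x y, 0 ≤ dist x y)
    (A : ℕ → Set V) (hA0 : A 0 = Set.univ) (hAnested : ∀ i, A (i + 1) ⊆ A i)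
    (p : ℕ → V → V) (hp_mem : ∀ i v, p i v ∈ A i)
    (hp_closest : ∀ i v, ∀ a ∈ A i, dist v (p i v) ≤ dist v a)
    (B : ℕ → V → Set V)
    (hB : ∀ i v x, x ∈ B i v ↔ x ∈ A i ∧ x ∉ A (i + 1) ∧ dist v x < dist v (p (i + 1) v))
    (u v : V) (istar : ℕ)
    (h_at : p istar u ∈ B istar v ∨ p istar v ∈ B istar u)
    (h_min : ∀ i < istar, ¬(p i u ∈ B i v ∨ p i v ∈ B i u)) :
    ∀ j ≤ istar, dist u (p j u) ≤ (j : ℝ) * dist u v ∧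
      dist v (p j v) ≤ (j : ℝ) * dist u v := by
  intro j
  induction j with
  | zero =>
    intro _
    refine ⟨?_, ?_⟩
    · have := (hp_closest 0 u u (by rw [hA0]; trivial)).trans (le_of_eq (dist_self u))
      simpa using this
    · have := (hp_closest 0 v v (by rw [hA0]; trivial)).trans (le_of_eq (dist_self v))
      simpa using this
  | succ j ih =>
    intro hj
    have hjlt : j < istar := hj
    obtain ⟨hu, hv⟩ := ih (le_of_lt hjlt)
    have hmin := h_min j hjlt
    push_neg at hmin
    obtain ⟨h1, h2⟩ := hmin
    have key : ∀ a b : V, p j a ∉ B j b → dist a (p j a) ≤ (j:ℝ) * dist u v →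
        dist a b = dist u v → dist b (p (j+1) b) ≤ ((j+1:ℕ):ℝ) * dist u v := by
      intro a b hnot ha hab
      rw [hB] at hnot
      push_neg at hnot
      by_cases hmem : p j a ∈ A (j+1)
      · calc dist b (p (j+1) b) ≤ dist b (p j a) := hp_closest _ _ _ hmem
          _ ≤ dist b a + dist a (p j a) := dist_triangle _ _ _
          _ ≤ dist u v + (j:ℝ) * dist u v := by
              rw [dist_symm, hab]; exact add_le_add le_rfl ha
          _ = ((j+1:ℕ):ℝ) * dist u v := by push_cast; ring
      · have := hnot (hp_mem j a) hmem
        calc dist b (p (j+1) b) ≤ dist b (p j a) := this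
          _ ≤ dist b a + dist a (p j a) := dist_triangle _ _ _
          _ ≤ dist u v + (j:ℝ) * dist u v := by
              rw [dist_symm, hab]; exact add_le_add le_rfl ha
          _ = ((j+1:ℕ):ℝ) * dist u v := by push_cast; ring
    exact ⟨key v u h2 hv (dist_symm v u), key u v h1 hu rfl⟩
end

section
/- In the Thorup–Zwick hierarchy, fix vertices u, v of a weighted graph G and let i* be the minimal index i such that p_i(u) ∈ B_i(v) or p_i(v) ∈ B_i(u). If the hopset H contains, for each vertex w and each x in the bunch of w, an edge (w,x) of weight dist_G(w,x), then there is a two-edge path in G ∪ H from u to v of total weight at most (2i* + 1)·dist_G(u,v). -/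
/-- Thorup–Zwick two-hop path: if the hopset `H` contains an edge from each vertex to
every member of its bunches (and to its pivots), and `i*` is the minimal index with
`p_{i*}(u) ∈ B_{i*}(v)` or `p_{i*}(v) ∈ B_{i*}(u)`, then there is a two-edge path in
`G ∪ H` from `u` to `v` of total weight at most `(2i* + 1)·dist(u,v)`. -/
theorem tz_two_hop_path {V : Type*} (dist : V → V → ℝ)
    (dist_self : ∀ x, dist x x = 0)
    (dist_symm : ∀ x y, dist x y = dist y x)
    (dist_triangle : ∀ x y z, dist x z ≤ dist x y + dist y z)
    (dist_nonneg : ∀ x y, 0 ≤ dist x y)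
    (A : ℕ → Set V) (hA0 : A 0 = Set.univ) (hAnested : ∀ i, A (i + 1) ⊆ A i)
    (p : ℕ → V → V) (hp_mem : ∀ i v, p i v ∈ A i)
    (hp_closest : ∀ i v, ∀ a ∈ A i, dist v (p i v) ≤ dist v a)
    (B : ℕ → V → Set V)
    (hB : ∀ i v x, x ∈ B i v ↔ x ∈ A i ∧ x ∉ A (i + 1) ∧ dist v x < dist v (p (i + 1) v))
    (H : Set (V × V))
    (hHbunch : ∀ w x, (∃ i, x ∈ B i w) → (w, x) ∈ H)
    (hHpivot : ∀ w i, (w, p i w) ∈ H)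
    (u v : V) (istar : ℕ)
    (h_at : p istar u ∈ B istar v ∨ p istar v ∈ B istar u)
    (h_min : ∀ i < istar, ¬(p i u ∈ B i v ∨ p i v ∈ B i u)) :
    ∃ m : V, ((u, m) ∈ H ∨ (m, u) ∈ H) ∧ ((m, v) ∈ H ∨ (v, m) ∈ H) ∧
      dist u m + dist m v ≤ (2 * (istar : ℝ) + 1) * dist u v := by
  set d := dist u v with hd
  have hdnn : 0 ≤ d := dist_nonneg u v
  -- joint induction bounding pivot distances
  have key : ∀ i ≤ istar, dist u (p i u) ≤ (i : ℝ) * d ∧ dist v (p i v) ≤ (i : ℝ) * d := by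
    intro i
    induction i with
    | zero =>
      intro _
      constructor
      · have := hp_closest 0 u u (by rw [hA0]; trivial)
        simpa [dist_self u] using this
      · have := hp_closest 0 v v (by rw [hA0]; trivial)
        simpa [dist_self v] using this
    | succ i ih =>
      intro hle
      have hi : i < istar := Nat.lt_of_succ_le hle
      obtain ⟨hu, hv⟩ := ih hi.le
      have hmin := h_min i hi
      push_neg at hmin
      obtain ⟨h1, h2⟩ := hmin
      -- from ¬ p i v ∈ B i u : dist u (p (i+1) u) ≤ dist u (p i v)
      have step : ∀ a b : V, ¬ p i b ∈ B i a →
          dist a (p (i+1) a) ≤ dist a (p i b) := by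
        intro a b hnb
        rw [hB] at hnb
        push_neg at hnb
        by_cases hmem : p i b ∈ A (i+1)
        · exact hp_closest (i+1) a _ hmem
        · have := hnb (hp_mem i b) hmem
          calc dist a (p (i+1) a) ≤ dist a (p (i+1) a) := le_refl _
          _ ≤ dist a (p i b) := this
      have hbvu : dist u (p i v) ≤ (i:ℝ) * d + d := by
        calc dist u (p i v) ≤ dist u v + dist v (p i v) := dist_triangle _ _ _
          _ ≤ d + (i:ℝ) * d := by rw [hd]; linarith
          _ = (i:ℝ) * d + d := by ring
      have hbuv : dist v (p i u) ≤ (i:ℝ) * d + d := by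
        calc dist v (p i u) ≤ dist v u + dist u (p i u) := dist_triangle _ _ _
          _ ≤ d + (i:ℝ) * d := by rw [hd, dist_symm v u]; linarith
          _ = (i:ℝ) * d + d := by ring
      constructor
      · -- p (i+1) u via p i v ∉ B i u
        have := step u v h2
        push_cast
        linarith [hbvu]
      · have := step v u h1
        push_cast
        linarith
  obtain ⟨hu, hv⟩ := key istar le_rfl
  rcases h_at with h | h
  · refine ⟨p istar u, Or.inl (hHpivot u istar), Or.inr (hHbunch v _ ⟨istar, h⟩), ?_⟩
    have h1 : dist (p istar u) v ≤ dist (p istar u) u + dist u v := dist_triangle _ _ _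
    rw [dist_symm (p istar u) u] at h1
    nlinarith
  · refine ⟨p istar v, Or.inl (hHbunch u _ ⟨istar, h⟩), Or.inr (hHpivot v istar), ?_⟩
    have h1 : dist u (p istar v) ≤ dist u v + dist v (p istar v) := dist_triangle _ _ _
    have h2 : dist (p istar v) v ≤ (istar : ℝ) * d := by rw [dist_symm]; exact hv
    nlinarith
end

section
/- Suppose a vertex x of a weighted graph G satisfies dist_G(x, A_s) > r₀, where A_s is the s-th level center set of a Thorup–Zwick hierarchy with s = ⌈k^ε⌉. Then for every vertex y with dist_G(x,y) ≤ r₀/(s+1), the minimal index i* such that p_{i*}(x) ∈ B_{i*}(y) or p_{i*}(y) ∈ B_{i*}(x) satisfies i* ≤ s; consequently, the TZ hopset contains a 2-hop path from x to y of length at most (2s+1)·dist_G(x,y). -/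
/-- Sparse-vertex case of the truncated TZ hopset: if `dist(x, A_s) > r₀` with
`s = ⌈k^ε⌉`, then for every `y` with `dist(x,y) ≤ r₀/(s+1)` the minimal bunch index
`i*` satisfies `i* ≤ s`, and the TZ hopset contains a 2-hop path from `x` to `y` of
length at most `(2s+1)·dist(x,y)`. -/
theorem tz_sparse_two_hop {V : Type*} (dist : V → V → ℝ)
    (dist_self : ∀ x, dist x x = 0)
    (dist_symm : ∀ x y, dist x y = dist y x)
    (dist_triangle : ∀ x y z, dist x z ≤ dist x y + dist y z)
    (dist_nonneg : ∀ x y, 0 ≤ dist x y)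
    (A : ℕ → Set V) (hA0 : A 0 = Set.univ) (hAnested : ∀ i, A (i + 1) ⊆ A i)
    (p : ℕ → V → V) (hp_mem : ∀ i v, p i v ∈ A i)
    (hp_closest : ∀ i v, ∀ a ∈ A i, dist v (p i v) ≤ dist v a)
    (B : ℕ → V → Set V)
    (hB : ∀ i v x, x ∈ B i v ↔ x ∈ A i ∧ x ∉ A (i + 1) ∧ dist v x < dist v (p (i + 1) v))
    (H : Set (V × V))
    (hHbunch : ∀ w x, (∃ i, x ∈ B i w) → (w, x) ∈ H)
    (hHpivot : ∀ w i, (w, p i w) ∈ H)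
    (k ε : ℝ) (hk : 1 ≤ k) (hε : 0 < ε)
    (s : ℕ) (hs : (s : ℤ) = ⌈k ^ ε⌉)
    (r₀ : ℝ) (hr₀ : 0 < r₀)
    (x y : V)
    (hfar : ∀ a ∈ A s, r₀ < dist x a)
    (hclose : dist x y ≤ r₀ / ((s : ℝ) + 1))
    (istar : ℕ)
    (h_at : p istar x ∈ B istar y ∨ p istar y ∈ B istar x)
    (h_min : ∀ i < istar, ¬(p i x ∈ B i y ∨ p i y ∈ B i x)) :
    istar ≤ s ∧ ∃ m : V, ((x, m) ∈ H ∨ (m, x) ∈ H) ∧ ((m, y) ∈ H ∨ (y, m) ∈ H) ∧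
      dist x m + dist m y ≤ (2 * (s : ℝ) + 1) * dist x y := by
  set d := dist x y with hd
  have hd0 : 0 ≤ d := dist_nonneg x y
  -- key claim: pivot distances grow at most by d per level up to istar
  have claim : ∀ i, i ≤ istar → dist x (p i x) ≤ i * d ∧ dist y (p i y) ≤ i * d := by
    intro i
    induction i with
    | zero =>
      intro _
      have hx0 : dist x (p 0 x) ≤ 0 := by
        have := hp_closest 0 x x (by rw [hA0]; trivial)
        simpa [dist_self] using this
      have hy0 : dist y (p 0 y) ≤ 0 := by
        have := hp_closest 0 y y (by rw [hA0]; trivial)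
        simpa [dist_self] using this
      constructor <;> simpa using by linarith [hx0, hy0]
    | succ i ih =>
      intro hle
      have hi : i ≤ istar := Nat.le_of_succ_le hle
      obtain ⟨ihx, ihy⟩ := ih hi
      have hmin := h_min i (Nat.lt_of_succ_le hle)
      push_neg at hmin
      obtain ⟨hnxy, hnyx⟩ := hmin
      -- dist y (p (i+1) y) ≤ dist y (p i x)
      have step1 : dist y (p (i+1) y) ≤ dist y (p i x) := by
        by_cases hm : p i x ∈ A (i+1)
        · exact hp_closest (i+1) y _ hm
        · rw [hB] at hnxy
          push_neg at hnxy
          exact hnxy (hp_mem i x) hm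
      have step2 : dist x (p (i+1) x) ≤ dist x (p i y) := by
        by_cases hm : p i y ∈ A (i+1)
        · exact hp_closest (i+1) x _ hm
        · rw [hB] at hnyx
          push_neg at hnyx
          exact hnyx (hp_mem i y) hm
      have tx : dist x (p i y) ≤ d + dist y (p i y) := dist_triangle x y (p i y)
      have ty : dist y (p i x) ≤ d + dist x (p i x) := by
        have := dist_triangle y x (p i x)
        rwa [dist_symm y x, ← hd] at this
      constructor
      · push_cast; nlinarith
      · push_cast; nlinarith
  -- istar ≤ s
  have hsle : istar ≤ s := by
    by_contra hc
    push_neg at hc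
    have hss : s ≤ istar := le_of_lt hc
    have hxs : dist x (p s x) ≤ s * d := (claim s hss).1
    have hsd : (s : ℝ) * d < r₀ := by
      have hpos : (0:ℝ) < (s:ℝ) + 1 := by positivity
      have : (s : ℝ) * d ≤ (s : ℝ) * (r₀ / ((s:ℝ)+1)) := by
        apply mul_le_mul_of_nonneg_left hclose (by positivity)
      have h2 : (s : ℝ) * (r₀ / ((s:ℝ)+1)) < r₀ := by
        rw [mul_div_assoc', div_lt_iff₀ hpos]
        nlinarith
      linarith
    exact absurd (hfar _ (hp_mem s x)) (by linarith)
  refine ⟨hsle, ?_⟩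
  have hsd' : (istar : ℝ) ≤ (s : ℝ) := by exact_mod_cast hsle
  rcases h_at with h | h
  · refine ⟨p istar x, Or.inl (hHpivot x istar), Or.inr (hHbunch y _ ⟨istar, h⟩), ?_⟩
    have h1 : dist x (p istar x) ≤ istar * d := (claim istar le_rfl).1
    have h2 : dist (p istar x) y ≤ dist (p istar x) x + d := by
      have := dist_triangle (p istar x) x y
      rwa [← hd] at this
    rw [dist_symm (p istar x) x] at h2
    nlinarith
  · refine ⟨p istar y, Or.inl (hHbunch x _ ⟨istar, h⟩), Or.inr (hHpivot y istar), ?_⟩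
    have h1 : dist y (p istar y) ≤ istar * d := (claim istar le_rfl).2
    have h2 : dist x (p istar y) ≤ d + dist y (p istar y) := dist_triangle x y (p istar y)
    rw [dist_symm (p istar y) y]
    nlinarith
end

section
/- Let Ĝ be a graph on N nodes, let Ĥ ⊆ Ĝ be a t-spanner of Ĝ (i.e., dist_Ĥ(A,B) ≤ t·dist_Ĝ(A,B) for all nodes A,B), and suppose each node of Ĝ corresponds to a cluster of radius r in a graph G (centered at a designated center), with two clusters adjacent in Ĝ whenever their centers are at G-distance at most D. Let H ⊆ G contain, for every edge (C,C') of Ĥ, a shortest path in G between the centers of C and C'. Then for any vertices u' ∈ C_u, v' ∈ C_v with (C_u, C_v) adjacent in Ĝ, dist_H(u', v') ≤ 2r + t·D. -/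

private lemma cluster_aux {V ι : Type*} (H : SimpleGraph V) (Hhat : SimpleGraph ι)
    (center : ι → V) (D : ℕ)
    (htrans : ∀ A B : ι, Hhat.Adj A B →
      H.Reachable (center A) (center B) ∧ H.dist (center A) (center B) ≤ D)
    {A B : ι} (p : Hhat.Walk A B) :
    H.Reachable (center A) (center B) ∧ H.dist (center A) (center B) ≤ p.length * D := by
  induction p with
  | nil => exact ⟨SimpleGraph.Reachable.refl _, by simp⟩
  | @cons A A' B h p ih =>
    obtain ⟨hr1, hd1⟩ := htrans _ _ h
    obtain ⟨hr2, hd2⟩ := ih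
    obtain ⟨w1, hw1⟩ := hr1.exists_walk_length_eq_dist
    obtain ⟨w2, hw2⟩ := hr2.exists_walk_length_eq_dist
    refine ⟨⟨w1.append w2⟩, ?_⟩
    calc H.dist (center A) (center B) ≤ (w1.append w2).length := H.dist_le _
      _ = w1.length + w2.length := SimpleGraph.Walk.length_append _ _
      _ ≤ D + p.length * D := by omega
      _ = (SimpleGraph.Walk.cons h p).length * D := by
          simp [SimpleGraph.Walk.length_cons]; ring

/-- Cluster-graph spanner translation: if `Ĥ` is a `t`-spanner of the cluster graph `Ĝ`
(whose nodes are clusters of radius `r` in `G`, adjacent when their centers are at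
`G`-distance at most `D`), and `H` realizes each `Ĥ`-edge by a path of length at most
`D` between the corresponding centers, then for `u' ∈ C_u`, `v' ∈ C_v` with
`(C_u,C_v)` adjacent in `Ĝ`, `dist_H(u',v') ≤ 2r + t·D`. -/
theorem cluster_graph_stretch {V ι : Type*} (G H : SimpleGraph V) (hHG : H ≤ G)
    (Ghat Hhat : SimpleGraph ι) (hHhat : Hhat ≤ Ghat)
    (t r D : ℕ) (center : ι → V) (member : ι → Set V)
    (hrad : ∀ A : ι, ∀ x ∈ member A, H.Reachable x (center A) ∧ H.dist x (center A) ≤ r)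
    (hadjD : ∀ A B : ι, Ghat.Adj A B → G.dist (center A) (center B) ≤ D)
    (hspan : ∀ A B : ι, Ghat.Reachable A B →
      Hhat.Reachable A B ∧ Hhat.dist A B ≤ t * Ghat.dist A B)
    (htrans : ∀ A B : ι, Hhat.Adj A B →
      H.Reachable (center A) (center B) ∧ H.dist (center A) (center B) ≤ D)
    (Cu Cv : ι) (u' v' : V) (hu' : u' ∈ member Cu) (hv' : v' ∈ member Cv)
    (hadj : Ghat.Adj Cu Cv) :
    H.dist u' v' ≤ 2 * r + t * D := by
  obtain ⟨hreach, hdist⟩ := hspan Cu Cv hadj.reachable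
  have hG1 : Ghat.dist Cu Cv = 1 := (SimpleGraph.dist_eq_one_iff_adj).2 hadj
  rw [hG1, mul_one] at hdist
  obtain ⟨p, hp⟩ := hreach.exists_walk_length_eq_dist
  obtain ⟨hrc, hdc⟩ := cluster_aux H Hhat center D htrans p
  have hdc' : H.dist (center Cu) (center Cv) ≤ t * D := by
    calc H.dist (center Cu) (center Cv) ≤ p.length * D := hdc
      _ ≤ t * D := Nat.mul_le_mul_right D (by omega)
  obtain ⟨hru, hdu⟩ := hrad Cu u' hu'
  obtain ⟨hrv, hdv⟩ := hrad Cv v' hv'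
  obtain ⟨wu, hwu⟩ := hru.exists_walk_length_eq_dist
  obtain ⟨wc, hwc⟩ := hrc.exists_walk_length_eq_dist
  obtain ⟨wv, hwv⟩ := hrv.exists_walk_length_eq_dist
  calc H.dist u' v' ≤ ((wu.append wc).append wv.reverse).length := H.dist_le _
    _ = wu.length + wc.length + wv.length := by
        simp [SimpleGraph.Walk.length_append]
    _ ≤ 2 * r + t * D := by omega
end
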